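/- Minor preservation under GASS perturbation. Let B ≥ 2, let e₁, …, e_B ∈ ℝᵈ, and let t, u ∈ ℝᵈ be orthonormal vectors. For δ = ((a₁, …, a_B), (b₁, …, b_B)) ∈ ℝ^B × ℝ^B define ẽᵢ(δ) = eᵢ + aᵢ t + bᵢ u, and let Ã(δ) be the d × (B−1) real matrix whose columns are the edge vectors vᵢ(δ) = ẽᵢ(δ) − ẽ₁(δ), i = 2, …, B. Let δ be distributed as the product of i.i.d. uniform distributions on [−r₁, r₁] for the aᵢ and on [−r₂, r₂] for the bᵢ, all independent. Then for every row-selection function s : Fin (B−1) → Fin d, the expectation of the (B−1) × (B−1) minor determinant satisfies E[ det( Ã(δ).submatrix s id ) ] = det( Ã(0).submatrix s id ). -/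

import Mathlib

open MeasureTheory

/-- The uniform probability distribution on `[-r, r]`; for `r = 0` this is the Dirac mass
at `0`. -/
noncomputable def unifIcc (r : ℝ) : Measure ℝ :=
  if r = 0 then Measure.dirac 0
  else ((2 * r).toNNReal)⁻¹ • volume.restrict (Set.Icc (-r) r)

instance (r : ℝ) : SigmaFinite (unifIcc r) := by
  unfold unifIcc; split <;> infer_instance

/-- Product measure: `B` i.i.d. uniform shifts `aᵢ` on `[-r₁, r₁]` and `B` i.i.d. uniform
shifts `bᵢ` on `[-r₂, r₂]`, all `2B` coordinates independent. -/
noncomputable def gassMeasure (B : ℕ) (r₁ r₂ : ℝ) :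
    Measure ((Fin B → ℝ) × (Fin B → ℝ)) :=
  (Measure.pi fun _ => unifIcc r₁).prod (Measure.pi fun _ => unifIcc r₂)

/-- Perturbed points `ẽᵢ(δ) = eᵢ + aᵢ • t + bᵢ • u` where `δ = (a, b)`. -/
noncomputable def gassPert {d B : ℕ} (e : Fin B → EuclideanSpace ℝ (Fin d))
    (t u : EuclideanSpace ℝ (Fin d)) (δ : (Fin B → ℝ) × (Fin B → ℝ)) (i : Fin B) :
    EuclideanSpace ℝ (Fin d) :=
  e i + δ.1 i • t + δ.2 i • u

/-- Edge vectors `vᵢ(δ) = ẽᵢ₊₁(δ) - ẽ₁(δ)`, for `i = 2, …, B` (indexed by `Fin (B - 1)`). -/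
noncomputable def gassEdge {d B : ℕ} (e : Fin B → EuclideanSpace ℝ (Fin d))
    (t u : EuclideanSpace ℝ (Fin d)) (δ : (Fin B → ℝ) × (Fin B → ℝ))
    (j : Fin (B - 1)) : EuclideanSpace ℝ (Fin d) :=
  gassPert e t u δ ⟨j.1 + 1, by have := j.2; omega⟩ -
    gassPert e t u δ ⟨0, by have := j.2; omega⟩

/-- The `(B-1) × (B-1)` Gram matrix of the edge vectors, `G̃(δ)ᵢⱼ = ⟨vᵢ(δ), vⱼ(δ)⟩`. -/
noncomputable def gassGram {d B : ℕ} (e : Fin B → EuclideanSpace ℝ (Fin d))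
    (t u : EuclideanSpace ℝ (Fin d)) (δ : (Fin B → ℝ) × (Fin B → ℝ)) :
    Matrix (Fin (B - 1)) (Fin (B - 1)) ℝ :=
  Matrix.of fun i j => inner ℝ (gassEdge e t u δ i) (gassEdge e t u δ j)

/-- The `d × (B-1)` edge matrix `Ã(δ)` whose columns are the edge vectors `vᵢ(δ)`. -/
noncomputable def gassEdgeMatrix {d B : ℕ} (e : Fin B → EuclideanSpace ℝ (Fin d))
    (t u : EuclideanSpace ℝ (Fin d)) (δ : (Fin B → ℝ) × (Fin B → ℝ)) :
    Matrix (Fin d) (Fin (B - 1)) ℝ :=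
  Matrix.of fun i j => gassEdge e t u δ j i

/-!
Writing `Δa j = a (j + 1) - a 0`, the perturbed edge matrix is
`Ã(a, b) = Ã(0, b) + t Δaᵀ`: every row of the minor moves by a multiple of the same row vector
`Δa`. A determinant is affine along such a rank-one perturbation (terms using the perturbation
twice have two proportional rows), so the minors at `(a, b)` and `(-a, b)` average to the minor
at `(0, b)`. The law of `a` is invariant under `a ↦ -a`, hence the expected minor equals the
expected minor at `(0, b)`; the same argument in `b` leaves the unperturbed minor.
-/

open Matrix

namespace AlternatingMap

variable {R M N ι : Type*} [CommRing R] [AddCommGroup M] [Module R M] [AddCommGroup N]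
  [Module R N] [Fintype ι]

theorem map_add_smul_eq_sum_powerset [DecidableEq ι] (f : M [⋀^ι]→ₗ[R] N) (w : ι → M)
    (c : ι → R) (v : M) :
    f (fun i => w i + c i • v) =
      ∑ S : Finset ι, (∏ i ∈ S, c i) • f (S.piecewise (fun _ => v) w) := by
  rw [show (fun i => w i + c i • v) = (fun i => c i • v) + w from funext fun i => add_comm _ _,
    f.map_add_univ]
  refine Finset.sum_congr rfl fun S _ => ?_
  have hpiece : S.piecewise (fun i => c i • v) w =
      S.piecewise (fun i => c i • S.piecewise (fun _ => v) w i) (S.piecewise (fun _ => v) w) := by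
    ext i
    by_cases hi : i ∈ S <;> simp [hi]
  rw [hpiece]
  exact f.toMultilinearMap.map_piecewise_smul c _ S

/-- Only the constant term of the expansion survives: the linear terms cancel, and every
higher term repeats the entry `v`. -/
theorem map_add_smul_add_map_sub_smul (f : M [⋀^ι]→ₗ[R] N) (w : ι → M) (c : ι → R) (v : M) :
    f (fun i => w i + c i • v) + f (fun i => w i - c i • v) = 2 • f w := by
  classical
  simp_rw [sub_eq_add_neg, ← neg_smul, map_add_smul_eq_sum_powerset, ← Finset.sum_add_distrib]
  rw [Finset.sum_eq_single ∅ ?_ (by simp)]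
  · simp [two_smul]
  intro S _ hS
  rw [Finset.prod_neg, ← add_smul]
  obtain hS1 | hS2 := (Finset.one_le_card.2 (Finset.nonempty_iff_ne_empty.2 hS)).eq_or_lt
  · rw [← hS1]; simp
  · obtain ⟨i, hi, j, hj, hij⟩ := Finset.one_lt_card.1 hS2
    rw [f.map_eq_zero_of_eq _ (by simp [hi, hj]) hij]
    simp

end AlternatingMap

theorem Matrix.det_add_vecMulVec_add_det_sub_vecMulVec {n R : Type*} [Fintype n]
    [DecidableEq n] [CommRing R] (A : Matrix n n R) (c v : n → R) :
    (A + vecMulVec c v).det + (A - vecMulVec c v).det = 2 * A.det := by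
  rw [two_mul, ← two_nsmul]
  exact detRowAlternating.map_add_smul_add_map_sub_smul A c v

theorem MeasureTheory.integral_eq_integral_of_add_comp_eq_two_mul {α : Type*}
    [MeasurableSpace α] {μ : Measure α} {σ : α → α} (hσ : MeasurePreserving σ μ μ) {f g : α → ℝ}
    (hf : Integrable f μ) (hfg : ∀ x, f x + f (σ x) = 2 * g x) :
    ∫ x, f x ∂μ = ∫ x, g x ∂μ := by
  have hfσ : ∫ x, f (σ x) ∂μ = ∫ x, f x ∂μ := by
    have hfm : AEStronglyMeasurable f (μ.map σ) := hσ.map_eq.symm ▸ hf.aestronglyMeasurable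
    rw [← integral_map hσ.measurable.aemeasurable hfm, hσ.map_eq]
  have hfσi : Integrable (fun x => f (σ x)) μ := hσ.integrable_comp_of_integrable hf
  have h2 : 2 * ∫ x, g x ∂μ = 2 * ∫ x, f x ∂μ := by
    rw [← integral_const_mul, ← integral_congr_ae (.of_forall hfg), integral_add hf hfσi, hfσ,
      two_mul]
  linarith

theorem Continuous.integrable_of_ae_mem_isCompact {X E : Type*} [TopologicalSpace X]
    [T2Space X] [MeasurableSpace X] [OpensMeasurableSpace X] [NormedAddCommGroup E]
    {μ : Measure X} [IsFiniteMeasure μ] {f : X → E} (hf : Continuous f) {K : Set X}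
    (hK : IsCompact K) (hμK : ∀ᵐ x ∂μ, x ∈ K) : Integrable f μ := by
  rw [← Measure.restrict_eq_self_of_ae_mem hμK]
  exact hf.continuousOn.integrableOn_compact hK

instance (r : ℝ) : IsFiniteMeasure (unifIcc r) := by
  unfold unifIcc; split <;> infer_instance

theorem isProbabilityMeasure_unifIcc {r : ℝ} (hr : 0 ≤ r) : IsProbabilityMeasure (unifIcc r) := by
  constructor
  unfold unifIcc
  split_ifs with h
  · simp
  · have h2r : (2 * r).toNNReal ≠ 0 := by
      simpa using lt_of_le_of_ne hr (Ne.symm h)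
    rw [Measure.smul_apply, Measure.restrict_apply_univ, Real.volume_Icc,
      show r - -r = 2 * r by ring, ENNReal.smul_def, smul_eq_mul, ENNReal.ofReal,
      ← ENNReal.coe_mul, inv_mul_cancel₀ h2r, ENNReal.coe_one]

instance (r : ℝ) : (unifIcc r).IsNegInvariant := by
  refine ⟨?_⟩
  rw [Measure.neg_def]
  unfold unifIcc
  split_ifs
  · simp [Measure.map_dirac' measurable_neg]
  · have hmap := ((Measure.measurePreserving_neg (volume : Measure ℝ)).restrict_preimage
      (measurableSet_Icc (a := -r) (b := r))).map_eq
    rw [show Neg.neg ⁻¹' Set.Icc (-r) r = Set.Icc (-r) r by simp] at hmap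
    rw [Measure.map_smul, hmap]

theorem ae_mem_unifIcc (r : ℝ) : ∀ᵐ x ∂unifIcc r, x ∈ Set.Icc (-r) r := by
  unfold unifIcc
  split_ifs with h
  · simp [h]
  · exact Measure.ae_smul_measure (ae_restrict_mem measurableSet_Icc) _

def edgeDiff {B : ℕ} (a : Fin B → ℝ) (j : Fin (B - 1)) : ℝ :=
  a ⟨j.1 + 1, by have := j.2; omega⟩ - a ⟨0, by have := j.2; omega⟩

theorem edgeDiff_neg {B : ℕ} (a : Fin B → ℝ) : edgeDiff (-a) = -edgeDiff a := by
  ext j; simp only [edgeDiff, Pi.neg_apply]; ring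

noncomputable def gassMinor {d B : ℕ} (e : Fin B → EuclideanSpace ℝ (Fin d))
    (t u : EuclideanSpace ℝ (Fin d)) (s : Fin (B - 1) → Fin d)
    (δ : (Fin B → ℝ) × (Fin B → ℝ)) : ℝ :=
  ((gassEdgeMatrix e t u δ).submatrix s id).det

section GassMinor

variable {d B : ℕ} (e : Fin B → EuclideanSpace ℝ (Fin d)) (t u : EuclideanSpace ℝ (Fin d))

theorem gassEdgeMatrix_eq_add_fst (a b : Fin B → ℝ) :
    gassEdgeMatrix e t u (a, b) = gassEdgeMatrix e t u (0, b) + vecMulVec t (edgeDiff a) := by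
  ext i j
  simp only [gassEdgeMatrix, gassEdge, gassPert, edgeDiff, vecMulVec, of_apply,
    Matrix.add_apply, PiLp.sub_apply, PiLp.add_apply, PiLp.smul_apply, Pi.zero_apply, smul_eq_mul]
  ring

theorem gassEdgeMatrix_eq_add_snd (a b : Fin B → ℝ) :
    gassEdgeMatrix e t u (a, b) = gassEdgeMatrix e t u (a, 0) + vecMulVec u (edgeDiff b) := by
  ext i j
  simp only [gassEdgeMatrix, gassEdge, gassPert, edgeDiff, vecMulVec, of_apply,
    Matrix.add_apply, PiLp.sub_apply, PiLp.add_apply, PiLp.smul_apply, Pi.zero_apply, smul_eq_mul]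
  ring

variable (s : Fin (B - 1) → Fin d)

theorem gassMinor_add_gassMinor_neg_fst (a b : Fin B → ℝ) :
    gassMinor e t u s (a, b) + gassMinor e t u s (-a, b) = 2 * gassMinor e t u s (0, b) := by
  rw [gassMinor, gassMinor, gassEdgeMatrix_eq_add_fst e t u a,
    gassEdgeMatrix_eq_add_fst e t u (-a), edgeDiff_neg, vecMulVec_neg, ← sub_eq_add_neg]
  exact det_add_vecMulVec_add_det_sub_vecMulVec _ (fun i => t (s i)) (edgeDiff a)

theorem gassMinor_add_gassMinor_neg_snd (a b : Fin B → ℝ) :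
    gassMinor e t u s (a, b) + gassMinor e t u s (a, -b) = 2 * gassMinor e t u s (a, 0) := by
  rw [gassMinor, gassMinor, gassEdgeMatrix_eq_add_snd e t u a b,
    gassEdgeMatrix_eq_add_snd e t u a (-b), edgeDiff_neg, vecMulVec_neg, ← sub_eq_add_neg]
  exact det_add_vecMulVec_add_det_sub_vecMulVec _ (fun i => u (s i)) (edgeDiff b)

theorem continuous_gassMinor : Continuous (gassMinor e t u s) := by
  refine Continuous.matrix_det (continuous_matrix fun i j => ?_)
  simp only [gassEdgeMatrix, gassEdge, gassPert, submatrix_apply, of_apply, id,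
    PiLp.sub_apply, PiLp.add_apply, PiLp.smul_apply, smul_eq_mul]
  fun_prop

end GassMinor

section GassMeasure

variable {B : ℕ} {r₁ r₂ : ℝ}

instance : IsFiniteMeasure (gassMeasure B r₁ r₂) := by
  unfold gassMeasure; infer_instance

theorem isProbabilityMeasure_gassMeasure (hr₁ : 0 ≤ r₁) (hr₂ : 0 ≤ r₂) :
    IsProbabilityMeasure (gassMeasure B r₁ r₂) := by
  have := isProbabilityMeasure_unifIcc hr₁
  have := isProbabilityMeasure_unifIcc hr₂
  unfold gassMeasure; infer_instance

theorem measurePreserving_neg_fst_gassMeasure :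
    MeasurePreserving (fun δ : (Fin B → ℝ) × (Fin B → ℝ) => (-δ.1, δ.2))
      (gassMeasure B r₁ r₂) (gassMeasure B r₁ r₂) :=
  (Measure.measurePreserving_neg _).prod (MeasurePreserving.id _)

theorem measurePreserving_neg_snd_gassMeasure :
    MeasurePreserving (fun δ : (Fin B → ℝ) × (Fin B → ℝ) => (δ.1, -δ.2))
      (gassMeasure B r₁ r₂) (gassMeasure B r₁ r₂) :=
  (MeasurePreserving.id _).prod (Measure.measurePreserving_neg _)

theorem ae_mem_gassMeasure : ∀ᵐ δ ∂gassMeasure B r₁ r₂,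
    δ ∈ (Set.univ.pi fun _ => Set.Icc (-r₁) r₁) ×ˢ (Set.univ.pi fun _ => Set.Icc (-r₂) r₂) := by
  have h₁ : ∀ᵐ a ∂Measure.pi fun _ : Fin B => unifIcc r₁, ∀ i, a i ∈ Set.Icc (-r₁) r₁ :=
    Measure.ae_pi_le_pi (Filter.eventually_pi fun _ => ae_mem_unifIcc r₁)
  have h₂ : ∀ᵐ b ∂Measure.pi fun _ : Fin B => unifIcc r₂, ∀ i, b i ∈ Set.Icc (-r₂) r₂ :=
    Measure.ae_pi_le_pi (Filter.eventually_pi fun _ => ae_mem_unifIcc r₂)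
  filter_upwards [Measure.quasiMeasurePreserving_fst.ae h₁,
    Measure.quasiMeasurePreserving_snd.ae h₂] with δ hδ₁ hδ₂
  exact ⟨fun i _ => hδ₁ i, fun i _ => hδ₂ i⟩

theorem Continuous.integrable_gassMeasure {f : (Fin B → ℝ) × (Fin B → ℝ) → ℝ}
    (hf : Continuous f) : Integrable f (gassMeasure B r₁ r₂) :=
  hf.integrable_of_ae_mem_isCompact
    ((isCompact_univ_pi fun _ => isCompact_Icc).prod (isCompact_univ_pi fun _ => isCompact_Icc))
    ae_mem_gassMeasure

end GassMeasure

theorem gass_expected_minor_eq_general {d B : ℕ}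
    (e : Fin B → EuclideanSpace ℝ (Fin d)) (t u : EuclideanSpace ℝ (Fin d))
    {r₁ r₂ : ℝ} (hr₁ : 0 ≤ r₁) (hr₂ : 0 ≤ r₂) :
    ∀ s : Fin (B - 1) → Fin d,
      ∫ δ, ((gassEdgeMatrix e t u δ).submatrix s id).det ∂(gassMeasure B r₁ r₂) =
        ((gassEdgeMatrix e t u 0).submatrix s id).det := by
  intro s
  have : IsProbabilityMeasure (gassMeasure B r₁ r₂) := isProbabilityMeasure_gassMeasure hr₁ hr₂
  have hcont := continuous_gassMinor e t u s
  calc ∫ δ, gassMinor e t u s δ ∂gassMeasure B r₁ r₂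
      = ∫ δ, gassMinor e t u s (0, δ.2) ∂gassMeasure B r₁ r₂ :=
        integral_eq_integral_of_add_comp_eq_two_mul measurePreserving_neg_fst_gassMeasure
          hcont.integrable_gassMeasure fun δ => gassMinor_add_gassMinor_neg_fst e t u s δ.1 δ.2
    _ = ∫ _, gassMinor e t u s 0 ∂gassMeasure B r₁ r₂ :=
        integral_eq_integral_of_add_comp_eq_two_mul measurePreserving_neg_snd_gassMeasure
          (hcont.comp (by fun_prop)).integrable_gassMeasure
          fun δ => gassMinor_add_gassMinor_neg_snd e t u s 0 δ.2
    _ = gassMinor e t u s 0 := by simp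

/-- **Minor preservation under GASS perturbation.** For `B ≥ 2` points `e₁, …, e_B ∈ ℝᵈ`
perturbed along two orthonormal directions `t, u` by independent uniform shifts on
`[-r₁, r₁]` and `[-r₂, r₂]`, every maximal `(B-1) × (B-1)` minor of the perturbed edge
matrix `Ã(δ)` (obtained by selecting rows via `s : Fin (B-1) → Fin d`) has the same
expectation as the corresponding unperturbed minor. -/
theorem gass_expected_minor_eq {d B : ℕ} (hB : 2 ≤ B)
    (e : Fin B → EuclideanSpace ℝ (Fin d)) (t u : EuclideanSpace ℝ (Fin d))
    (ht : ‖t‖ = 1) (hu : ‖u‖ = 1) (htu : inner ℝ t u = (0 : ℝ))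
    {r₁ r₂ : ℝ} (hr₁ : 0 ≤ r₁) (hr₂ : 0 ≤ r₂) :
    ∀ s : Fin (B - 1) → Fin d,
      ∫ δ, ((gassEdgeMatrix e t u δ).submatrix s id).det ∂(gassMeasure B r₁ r₂) =
        ((gassEdgeMatrix e t u 0).submatrix s id).det :=
  gass_expected_minor_eq_general e t u hr₁ hr₂
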